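/- (FloodSet agreement.) Let f be a natural number with r = f + 1, suppose the delivery pattern is consistent with the crash pattern, and suppose the set of faulty processes {q | crash q ≠ none} has cardinality at most f. Then all correct processes decide the same value: for all processes p and q with crash p = none and crash q = none, the minimum of W r p equals the minimum of W r q. -/

import Mathlib

open scoped Classical

/-- The FloodSet execution: `W 0 p = {init p}` and, for `t < r`,
`W (t+1) p = W t p ∪ ⋃ q, (if delivered t q p then W t q else ∅)`
(beyond round `r` the set is just carried along). -/
noncomputable def floodW {n r : ℕ} {V : Type} (init : Fin n → V)
    (delivered : Fin r → Fin n → Fin n → Prop) : ℕ → Fin n → Finset V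
  | 0, p => {init p}
  | t + 1, p =>
      if h : t < r then
        floodW init delivered t p ∪
          Finset.univ.biUnion fun q =>
            if delivered ⟨t, h⟩ q p then floodW init delivered t q else ∅
      else floodW init delivered t p

/-- Process `p` is alive at the end of round `t`. -/
def aliveAtEnd {n r : ℕ} (crash : Fin n → Option (Fin r)) (t : ℕ) (p : Fin n) : Prop :=
  crash p = none ∨ ∃ s : Fin r, crash p = some s ∧ t < s.val

/-- The delivery pattern is consistent with the crash pattern. -/
def consistentDel {n r : ℕ} (crash : Fin n → Option (Fin r))
    (delivered : Fin r → Fin n → Fin n → Prop) : Prop :=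
  (∀ (t : Fin r) (q p : Fin n),
      (crash q = none ∨ ∃ s : Fin r, crash q = some s ∧ t.val < s.val) → delivered t q p) ∧
  (∀ (t : Fin r) (q p : Fin n) (s : Fin r), crash q = some s → s.val < t.val →
      ¬ delivered t q p)

/-! With at most `f` faulty processes, one of the `f + 1` rounds is clean: nobody crashes in it.
After a clean round `t`, every process alive at its end holds exactly the union `U` of the sets
that the survivors of round `t` held before it: it heard from all of them and, since no sender
crashed during round `t`, from nobody else. Uniformity then persists, because every later sender
survived the previous round and so already holds `U`. Hence all correct processes end with `U`
and decide its minimum. -/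

open Finset

lemma exists_forall_ne_some_of_card_lt {α β : Type*} [Fintype α] [Fintype β]
    (g : α → Option β) (h : #{a | g a ≠ none} < Fintype.card β) :
    ∃ b, ∀ a, g a ≠ some b := by
  by_contra! hsurj
  let get : {a // g a ≠ none} → β := fun a => (g a).get (Option.isSome_iff_ne_none.2 a.2)
  have hget : Function.Surjective get := by
    intro b
    obtain ⟨a, ha⟩ := hsurj b
    obtain ⟨ha', hab⟩ := Option.eq_some_iff_get_eq.1 ha
    exact ⟨⟨a, Option.isSome_iff_ne_none.1 ha'⟩, hab⟩
  have := Fintype.card_le_of_surjective get hget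
  rw [Fintype.card_subtype] at this
  omega

section FloodSet

variable {n r : ℕ} {V : Type} {init : Fin n → V} {crash : Fin n → Option (Fin r)}
  {delivered : Fin r → Fin n → Fin n → Prop}

lemma mem_floodW_succ {t : ℕ} (ht : t < r) {p : Fin n} {x : V} :
    x ∈ floodW init delivered (t + 1) p ↔
      x ∈ floodW init delivered t p ∨
        ∃ q, delivered ⟨t, ht⟩ q p ∧ x ∈ floodW init delivered t q := by
  rw [floodW, dif_pos ht]
  simp only [mem_union, mem_biUnion, mem_univ, true_and, apply_ite (x ∈ ·), notMem_empty,
    if_false_right]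

lemma aliveAtEnd.mono {s t : ℕ} {p : Fin n} (hst : s ≤ t) (h : aliveAtEnd crash t p) :
    aliveAtEnd crash s p := by
  rcases h with h | ⟨c, hc, hlt⟩
  · exact Or.inl h
  · exact Or.inr ⟨c, hc, hst.trans_lt hlt⟩

lemma aliveAtEnd_or_crash_eq_of_delivered (hcons : consistentDel crash delivered) {t : ℕ}
    (ht : t < r) {q p : Fin n} (hd : delivered ⟨t, ht⟩ q p) :
    aliveAtEnd crash t q ∨ crash q = some ⟨t, ht⟩ := by
  rcases hq : crash q with _ | s
  · exact Or.inl (Or.inl hq)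
  · rcases lt_trichotomy s.val t with hlt | heq | hgt
    · exact absurd hd (hcons.2 _ q p s hq hlt)
    · exact Or.inr (congrArg some (Fin.ext heq))
    · exact Or.inl (Or.inr ⟨s, hq, hgt⟩)

lemma aliveAtEnd_of_delivered (hcons : consistentDel crash delivered) {t : ℕ} (ht : t + 1 < r)
    {q p : Fin n} (hd : delivered ⟨t + 1, ht⟩ q p) : aliveAtEnd crash t q := by
  obtain hq | hq := aliveAtEnd_or_crash_eq_of_delivered hcons ht hd
  · exact hq.mono t.le_succ
  · exact Or.inr ⟨_, hq, t.lt_succ_self⟩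

lemma floodW_succ_eq_of_clean_round (hcons : consistentDel crash delivered) {t : ℕ} (ht : t < r)
    (hclean : ∀ q, crash q ≠ some ⟨t, ht⟩) {p : Fin n} (hp : aliveAtEnd crash t p) :
    floodW init delivered (t + 1) p =
      (univ.filter (aliveAtEnd crash t)).biUnion (floodW init delivered t) := by
  ext x
  simp only [mem_floodW_succ ht, mem_biUnion, mem_filter, mem_univ, true_and]
  constructor
  · rintro (hx | ⟨q, hd, hx⟩)
    · exact ⟨p, hp, hx⟩
    · exact ⟨q, (aliveAtEnd_or_crash_eq_of_delivered hcons ht hd).resolve_right (hclean q), hx⟩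
  · rintro ⟨q, hq, hx⟩
    exact Or.inr ⟨q, hcons.1 _ q p hq, hx⟩

lemma floodW_succ_succ_eq_of_forall_aliveAtEnd (hcons : consistentDel crash delivered) {t : ℕ}
    (ht : t + 1 < r) {U : Finset V}
    (hU : ∀ q, aliveAtEnd crash t q → floodW init delivered (t + 1) q = U) {p : Fin n}
    (hp : aliveAtEnd crash (t + 1) p) : floodW init delivered (t + 2) p = U := by
  ext x
  rw [mem_floodW_succ ht, ← hU p (hp.mono t.le_succ)]
  constructor
  · rintro (hx | ⟨q, hd, hx⟩)
    · exact hx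
    · rwa [hU q (aliveAtEnd_of_delivered hcons ht hd), ← hU p (hp.mono t.le_succ)] at hx
  · exact Or.inl

lemma floodW_eq_of_clean_round (hcons : consistentDel crash delivered) {t : ℕ} (ht : t < r)
    (hclean : ∀ q, crash q ≠ some ⟨t, ht⟩) {s : ℕ} (hts : t ≤ s) (hs : s < r)
    {p : Fin n} (hp : aliveAtEnd crash s p) :
    floodW init delivered (s + 1) p =
      (univ.filter (aliveAtEnd crash t)).biUnion (floodW init delivered t) := by
  induction s, hts using Nat.le_induction generalizing p with
  | base => exact floodW_succ_eq_of_clean_round hcons ht hclean hp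
  | succ s _ ih =>
    exact floodW_succ_succ_eq_of_forall_aliveAtEnd hcons hs (fun q hq => ih (by omega) hq) hp

lemma floodW_eq_of_correct_of_clean_round (hcons : consistentDel crash delivered) (T : Fin r)
    (hclean : ∀ q, crash q ≠ some T) {p q : Fin n} (hp : crash p = none) (hq : crash q = none) :
    floodW init delivered r p = floodW init delivered r q := by
  obtain ⟨m, rfl⟩ : ∃ m, r = m + 1 := ⟨r - 1, by have := T.pos; omega⟩
  rw [floodW_eq_of_clean_round hcons T.isLt hclean T.is_le m.lt_succ_self (Or.inl hp),
    floodW_eq_of_clean_round hcons T.isLt hclean T.is_le m.lt_succ_self (Or.inl hq)]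

end FloodSet

theorem stmt_9_general (n f r : ℕ) (hr : r = f + 1)
    (V : Type) [LinearOrder V]
    (init : Fin n → V) (crash : Fin n → Option (Fin r))
    (delivered : Fin r → Fin n → Fin n → Prop)
    (hcons : consistentDel crash delivered)
    (hf : (Finset.univ.filter fun q => crash q ≠ none).card ≤ f) :
    ∀ p q : Fin n, crash p = none → crash q = none →
      (floodW init delivered r p).min = (floodW init delivered r q).min := by
  intro p q hp hq
  obtain ⟨T, hclean⟩ :=
    exists_forall_ne_some_of_card_lt crash (by simp only [Fintype.card_fin]; omega)
  rw [floodW_eq_of_correct_of_clean_round hcons T hclean hp hq]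

/-- FloodSet agreement. -/
theorem stmt_9 (n f r : ℕ) (hr : r = f + 1)
    (V : Type) [Fintype V] [Nonempty V] [LinearOrder V]
    (init : Fin n → V) (crash : Fin n → Option (Fin r))
    (delivered : Fin r → Fin n → Fin n → Prop)
    (hcons : consistentDel crash delivered)
    (hf : (Finset.univ.filter fun q => crash q ≠ none).card ≤ f) :
    ∀ p q : Fin n, crash p = none → crash q = none →
      (floodW init delivered r p).min = (floodW init delivered r q).min :=
  stmt_9_general n f r hr V init crash delivered hcons hf
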